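/- For every λ in the open interval (0,1), the equation F(x) = λ has a unique real solution x. -/

import Mathlib

open Real Filter MeasureTheory

noncomputable def F : ℝ → ℝ := fun x =>
  if x = 0 then 1/2 else Real.exp x / (Real.exp x - 1) - 1/x

/-!
`F` is symmetric about `1/2`: `F (-x) = 1 - F x`, so it suffices to study it on `[0, ∞)`.
There `F' x = 1/x² - eˣ/(eˣ - 1)²` is positive because `2 sinh (x/2) > x`, the bounds
`1/2 < F x ≤ 1/2 + x/4` make `F` right-continuous at `0`, and `F x → 1` as `x → ∞`.
Hence `F` is a strictly increasing continuous map of `[0, ∞)` onto `[1/2, 1)`, and by the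
symmetry a strictly increasing bijection of `ℝ` onto `(0, 1)`.
-/

open Set Topology

lemma F_of_ne_zero {x : ℝ} (hx : x ≠ 0) : F x = exp x / (exp x - 1) - 1 / x := if_neg hx

lemma F_zero : F 0 = 1 / 2 := if_pos rfl

lemma exp_sub_one_ne_zero {x : ℝ} (hx : x ≠ 0) : exp x - 1 ≠ 0 := by
  simpa [sub_eq_zero, exp_eq_one_iff] using hx

lemma F_neg (x : ℝ) : F (-x) = 1 - F x := by
  rcases eq_or_ne x 0 with rfl | hx
  · norm_num [F_zero]
  have hE := exp_sub_one_ne_zero hx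
  have hE' : 1 - exp x ≠ 0 := fun h => hE (by linarith)
  rw [F_of_ne_zero hx, F_of_ne_zero (neg_ne_zero.mpr hx), exp_neg]
  field_simp
  ring

lemma sq_mul_exp_lt_exp_sub_one_sq {x : ℝ} (hx : 0 < x) : x ^ 2 * exp x < (exp x - 1) ^ 2 := by
  have hsinh : x < 2 * sinh (x / 2) := by linarith [self_lt_sinh_iff.mpr (half_pos hx)]
  have hexp : exp x = exp (x / 2) ^ 2 := by rw [← exp_nat_mul]; ring_nf
  calc x ^ 2 * exp x = (x * exp (x / 2)) ^ 2 := by rw [hexp]; ring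
    _ < (2 * sinh (x / 2) * exp (x / 2)) ^ 2 := by gcongr
    _ = (exp x - 1) ^ 2 := by
      rw [sinh_eq, exp_neg, hexp]
      field_simp

lemma hasDerivAt_F {x : ℝ} (hx : x ≠ 0) :
    HasDerivAt F (1 / x ^ 2 - exp x / (exp x - 1) ^ 2) x := by
  have hE := exp_sub_one_ne_zero hx
  have hquot := (hasDerivAt_exp x).div ((hasDerivAt_exp x).sub_const 1) hE
  have hinv : HasDerivAt (fun y : ℝ => 1 / y) (-(x ^ 2)⁻¹) x := by
    simpa [one_div] using hasDerivAt_inv hx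
  have hF : F =ᶠ[𝓝 x] fun y => exp y / (exp y - 1) - 1 / y := by
    filter_upwards [eventually_ne_nhds hx] with y hy using F_of_ne_zero hy
  refine ((hquot.sub hinv).congr_of_eventuallyEq hF).congr_deriv ?_
  field_simp
  ring

lemma deriv_F_pos {x : ℝ} (hx : 0 < x) : 0 < deriv F x := by
  have hE : 0 < (exp x - 1) ^ 2 := by
    have := exp_sub_one_ne_zero hx.ne'
    positivity
  rw [(hasDerivAt_F hx.ne').deriv, sub_pos, div_lt_div_iff₀ hE (by positivity)]
  linarith [sq_mul_exp_lt_exp_sub_one_sq hx]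

lemma two_mul_exp_sub_one_lt {x : ℝ} (hx : 0 < x) : 2 * (exp x - 1) < x * (exp x + 1) := by
  set g : ℝ → ℝ := fun y => y * (exp y + 1) - 2 * (exp y - 1)
  have hg : ∀ y, HasDerivAt g ((y - 1) * exp y + 1) y := fun y => by
    refine (((hasDerivAt_id' y).mul ((hasDerivAt_exp y).add_const 1)).sub
      (((hasDerivAt_exp y).sub_const 1).const_mul 2)).congr_deriv ?_
    ring
  have hg' : ∀ y ∈ interior (Ici (0 : ℝ)), 0 < deriv g y := by
    intro y hy
    rw [interior_Ici] at hy
    have hlt : 1 - y < exp (-y) := by linarith [add_one_lt_exp (neg_ne_zero.mpr hy.ne')]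
    have := mul_lt_mul_of_pos_right hlt (exp_pos y)
    rw [← exp_add, neg_add_cancel, exp_zero] at this
    rw [(hg y).deriv]
    linarith
  have hmono := strictMonoOn_of_deriv_pos (convex_Ici 0)
    (fun y _ => (hg y).continuousAt.continuousWithinAt) hg'
  have := hmono self_mem_Ici hx.le hx
  simp only [g, exp_zero] at this
  linarith

lemma half_lt_F {x : ℝ} (hx : 0 < x) : 1 / 2 < F x := by
  have hE : 0 < exp x - 1 := by linarith [add_one_lt_exp hx.ne']
  rw [F_of_ne_zero hx.ne', div_sub_div _ _ hE.ne' hx.ne', lt_div_iff₀ (by positivity)]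
  linarith [two_mul_exp_sub_one_lt hx]

lemma F_le_half_add {x : ℝ} (hx : 0 < x) : F x ≤ 1 / 2 + x / 4 := by
  have hE : 0 < exp x - 1 := by linarith [add_one_lt_exp hx.ne']
  have hq : x + x ^ 2 / 2 ≤ exp x - 1 := by linarith [quadratic_le_exp_of_nonneg hx.le]
  have hc : 0 ≤ 1 - x / 2 + x ^ 2 / 4 := by nlinarith [sq_nonneg (x - 1)]
  rw [F_of_ne_zero hx.ne', div_sub_div _ _ hE.ne' hx.ne', div_le_iff₀ (by positivity)]
  nlinarith [mul_le_mul_of_nonneg_right hq hc, pow_nonneg hx.le 4]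

lemma tendsto_F_nhdsGT_zero : Tendsto F (𝓝[>] 0) (𝓝 (1 / 2)) := by
  have hupper : Tendsto (fun x : ℝ => 1 / 2 + x / 4) (𝓝[>] 0) (𝓝 (1 / 2)) := by
    have : Tendsto (fun x : ℝ => 1 / 2 + x / 4) (𝓝 0) (𝓝 (1 / 2)) :=
      (continuous_const.add (continuous_id.div_const 4)).tendsto' 0 _ (by norm_num)
    exact this.mono_left nhdsWithin_le_nhds
  refine tendsto_of_tendsto_of_tendsto_of_le_of_le' tendsto_const_nhds hupper ?_ ?_
  · filter_upwards [self_mem_nhdsWithin] with x hx using (half_lt_F hx).le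
  · filter_upwards [self_mem_nhdsWithin] with x hx using F_le_half_add hx

lemma tendsto_F_atTop : Tendsto F atTop (𝓝 1) := by
  have hF : ∀ᶠ x in atTop, 1 + (exp x - 1)⁻¹ - x⁻¹ = F x := by
    filter_upwards [eventually_gt_atTop 0] with x hx
    have hE := exp_sub_one_ne_zero hx.ne'
    rw [F_of_ne_zero hx.ne']
    field_simp
    ring
  have hlim := (tendsto_const_nhds (x := (1 : ℝ))).add
    (tendsto_inv_atTop_zero.comp (tendsto_atTop_add_const_right _ (-1) tendsto_exp_atTop))
  simpa using (hlim.sub tendsto_inv_atTop_zero).congr' hF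

lemma continuousOn_F_Ici : ContinuousOn F (Ici 0) := by
  intro x hx
  rcases (mem_Ici.mp hx).eq_or_lt with rfl | hx
  · rw [← continuousWithinAt_Ioi_iff_Ici, ContinuousWithinAt, F_zero]
    exact tendsto_F_nhdsGT_zero
  · exact (hasDerivAt_F hx.ne').continuousAt.continuousWithinAt

lemma strictMonoOn_F_Ici : StrictMonoOn F (Ici 0) :=
  strictMonoOn_of_deriv_pos (convex_Ici 0) continuousOn_F_Ici fun x hx =>
    deriv_F_pos (by simpa using hx)

lemma strictMono_F : StrictMono F := by
  refine StrictMonoOn.Iic_union_Ici (a := 0) (fun x hx y hy hxy => ?_) strictMonoOn_F_Ici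
  have := strictMonoOn_F_Ici (mem_Ici.mpr (neg_nonneg.mpr hy))
    (mem_Ici.mpr (neg_nonneg.mpr hx)) (neg_lt_neg hxy)
  rw [F_neg, F_neg] at this
  linarith

lemma Ioo_half_one_subset_image_F : Ioo (1 / 2) 1 ⊆ F '' Ioi 0 := by
  intro l ⟨hl, hl1⟩
  obtain ⟨a, ha, hFa⟩ :=
    (eventually_mem_nhdsWithin.and (tendsto_F_nhdsGT_zero.eventually (gt_mem_nhds hl))).exists
  obtain ⟨b, hb, hFb⟩ :=
    ((eventually_gt_atTop 0).and (tendsto_F_atTop.eventually (lt_mem_nhds hl1))).exists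
  exact isPreconnected_Ioi.intermediate_value ha hb
    (continuousOn_F_Ici.mono Ioi_subset_Ici_self) ⟨hFa.le, hFb.le⟩

lemma Ioo_zero_one_subset_range_F : Ioo 0 1 ⊆ range F := by
  intro l ⟨hl0, hl1⟩
  rcases lt_trichotomy l (1 / 2) with hl | rfl | hl
  · obtain ⟨x, -, hx⟩ := Ioo_half_one_subset_image_F
      (show 1 - l ∈ Ioo (1 / 2) 1 from ⟨by linarith, by linarith⟩)
    exact ⟨-x, by rw [F_neg, hx]; ring⟩
  · exact ⟨0, F_zero⟩
  · obtain ⟨x, -, hx⟩ := Ioo_half_one_subset_image_F ⟨hl, hl1⟩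
    exact ⟨x, hx⟩

theorem F_exists_unique_solution :
    ∀ l ∈ Set.Ioo (0:ℝ) 1, ∃! x : ℝ, F x = l := by
  intro l hl
  obtain ⟨x, rfl⟩ := Ioo_zero_one_subset_range_F hl
  exact ⟨x, rfl, fun _ hy => strictMono_F.injective hy⟩
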